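/- arXiv:1101.1690 — 2 statements merged into one kernel-verified Lean document; each statement's English description precedes it below -/
import Mathlib

section
/- Let T₁,…,T₈ be the halved Gell-Mann matrices. Then the index-symmetrized cubic sum satisfies Σ_{I,J,K=1}^{8} [ (1/6)·Σ_{σ∈S₃} tr(T_{σ(I)}·T_{σ(J)}·T_{σ(K)}) ] · T_I·T_J·T_K = (5/18)·I₃, where for a permutation σ of the three index slots the notation T_{σ(I)}T_{σ(J)}T_{σ(K)} denotes the product with the indices I,J,K rearranged by σ, and I₃ is the 3×3 identity matrix. -/
/-- The eight halved Gell-Mann matrices `T₁,…,T₈`. -/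
noncomputable def gellMann : Fin 8 → Matrix (Fin 3) (Fin 3) ℂ :=
  ![(1 / 2 : ℂ) • !![0, 1, 0; 1, 0, 0; 0, 0, 0],
    (1 / 2 : ℂ) • !![0, -Complex.I, 0; Complex.I, 0, 0; 0, 0, 0],
    (1 / 2 : ℂ) • !![1, 0, 0; 0, -1, 0; 0, 0, 0],
    (1 / 2 : ℂ) • !![0, 0, 1; 0, 0, 0; 1, 0, 0],
    (1 / 2 : ℂ) • !![0, 0, -Complex.I; 0, 0, 0; Complex.I, 0, 0],
    (1 / 2 : ℂ) • !![0, 0, 0; 0, 0, 1; 0, 1, 0],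
    (1 / 2 : ℂ) • !![0, 0, 0; 0, 0, -Complex.I; 0, Complex.I, 0],
    (1 / (2 * (Real.sqrt 3 : ℂ))) • !![1, 0, 0; 0, 1, 0; 0, 0, -2]]

/-! By cyclicity of the trace, the symmetrised trace is the average of `tr (T_I T_J T_K)` and
`tr (T_I T_K T_J)`. The Gell-Mann matrices satisfy the completeness (Fierz) relation
`∑ᵢ (Tᵢ)_ab (Tᵢ)_cd = ½ δ_ad δ_bc - ⅙ δ_ab δ_cd`, i.e. `∑ᵢ tr (Tᵢ X) Tᵢ = ½ X - ⅙ (tr X) 1` and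
`∑ᵢ Tᵢ X Tᵢ = ½ (tr X) 1 - ⅙ X` for every `X`. These contract the two cubic sums one index at a time,
down to multiples of the identity: `-2/9` and `7/9`, whose average is `5/18`. -/

open Matrix

theorem sum_perm_fin_three {M : Type*} [AddCommMonoid M] (f : Fin 3 → Fin 3 → Fin 3 → M) :
    ∑ σ : Equiv.Perm (Fin 3), f (σ 0) (σ 1) (σ 2)
      = f 0 1 2 + f 0 2 1 + f 1 0 2 + f 1 2 0 + f 2 0 1 + f 2 1 0 := by
  simp only [← (Equiv.Perm.decomposeFin (n := 2)).symm.sum_comp,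
    ← (Equiv.Perm.decomposeFin (n := 1)).symm.sum_comp, Fintype.sum_prod_type, Fin.sum_univ_succ,
    Fintype.sum_unique]
  change f 0 1 2 + f 0 2 1 + (f 1 0 2 + f 1 2 0 + (f 2 1 0 + f 2 0 1)) = _
  abel

theorem sum_perm_trace_mul_mul {n R : Type*} [Fintype n] [CommSemiring R]
    (A : Fin 3 → Matrix n n R) :
    ∑ σ : Equiv.Perm (Fin 3), (A (σ 0) * A (σ 1) * A (σ 2)).trace
      = 3 * (A 0 * A 1 * A 2).trace + 3 * (A 0 * A 2 * A 1).trace := by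
  have h₁ : (A 1 * A 2 * A 0).trace = (A 0 * A 1 * A 2).trace := trace_mul_cycle ..
  have h₂ : (A 2 * A 0 * A 1).trace = (A 0 * A 1 * A 2).trace := (trace_mul_cycle ..).symm
  have h₃ : (A 1 * A 0 * A 2).trace = (A 0 * A 2 * A 1).trace := (trace_mul_cycle ..).symm
  have h₄ : (A 2 * A 1 * A 0).trace = (A 0 * A 2 * A 1).trace := trace_mul_cycle ..
  rw [sum_perm_fin_three fun a b c => (A a * A b * A c).trace, h₁, h₂, h₃, h₄]
  ring

variable {ι n R : Type*} [Fintype ι] [Fintype n] [DecidableEq n] [CommRing R]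

-- Generators of `su(N)` normalised by `tr (Tᵢ Tⱼ) = δᵢⱼ / 2` satisfy this with `α = 1/2`, `β = 1/(2N)`.
def FierzIdentity (T : ι → Matrix n n R) (α β : R) : Prop :=
  ∀ a b c d, ∑ i, T i a b * T i c d = α * ((1 : Matrix n n R) a d * (1 : Matrix n n R) c b)
    - β * ((1 : Matrix n n R) a b * (1 : Matrix n n R) c d)

namespace FierzIdentity

variable {T : ι → Matrix n n R} {α β : R}

theorem sum_trace_mul_smul (hT : FierzIdentity T α β) (X : Matrix n n R) :
    ∑ i, (T i * X).trace • T i = α • X - (β * X.trace) • 1 := by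
  ext a d
  calc (∑ i, (T i * X).trace • T i) a d = ∑ b, ∑ c, X c b * ∑ i, T i a d * T i b c := by
        simp only [Matrix.sum_apply, Matrix.smul_apply, smul_eq_mul, trace, diag, mul_apply,
          Finset.sum_mul, Finset.mul_sum]
        rw [Finset.sum_comm]
        refine Finset.sum_congr rfl fun b _ => ?_
        rw [Finset.sum_comm]
        exact Finset.sum_congr rfl fun c _ => Finset.sum_congr rfl fun i _ => by ring
    _ = _ := by
        simp [hT a d, one_apply, mul_sub, Finset.sum_sub_distrib, trace, Finset.mul_sum, mul_comm]

theorem sum_mul_mul (hT : FierzIdentity T α β) (X : Matrix n n R) :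
    ∑ i, T i * X * T i = (α * X.trace) • 1 - β • X := by
  ext a d
  calc (∑ i, T i * X * T i) a d = ∑ b, ∑ c, X c b * ∑ i, T i a c * T i b d := by
        simp only [Matrix.sum_apply, mul_apply, Finset.sum_mul, Finset.mul_sum]
        rw [Finset.sum_comm]
        refine Finset.sum_congr rfl fun b _ => ?_
        rw [Finset.sum_comm]
        exact Finset.sum_congr rfl fun c _ => Finset.sum_congr rfl fun i _ => by ring
    _ = _ := by
        simp [hT a, one_apply, mul_sub, Finset.sum_sub_distrib, trace, Finset.mul_sum, mul_comm]

local notation "N" => (Fintype.card n : R)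

theorem sum_mul_self (hT : FierzIdentity T α β) : ∑ i, T i * T i = (α * N - β) • 1 := by
  simpa [trace_one, sub_smul, smul_smul] using hT.sum_mul_mul 1

theorem sum_trace_smul (hT : FierzIdentity T α β) :
    ∑ i, (T i).trace • T i = (α - β * N) • 1 := by
  simpa [trace_one, sub_smul] using hT.sum_trace_mul_smul 1

theorem sum_trace_mul_smul_mul (hT : FierzIdentity T α β) (X Y : Matrix n n R) :
    ∑ i, (T i * X).trace • (T i * Y) = α • (X * Y) - (β * X.trace) • Y := by
  simp_rw [← smul_mul_assoc, ← Finset.sum_mul, hT.sum_trace_mul_smul, sub_mul, smul_mul_assoc,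
    one_mul]

theorem sum_sum_trace_mul_smul_mul (hT : FierzIdentity T α β) :
    ∑ j, ∑ k, (T j * T k).trace • (T j * T k) = (α ^ 2 * N - 2 * α * β + β ^ 2 * N) • 1 := by
  rw [Finset.sum_comm]
  simp_rw [← smul_mul_assoc, ← Finset.sum_mul, hT.sum_trace_mul_smul, sub_mul, smul_mul_assoc,
    one_mul, Finset.sum_sub_distrib, mul_smul, ← Finset.smul_sum, hT.sum_mul_self,
    hT.sum_trace_smul]
  module

theorem sum_sum_mul_mul_mul (hT : FierzIdentity T α β) :
    ∑ j, ∑ k, T j * T k * T j * T k = (α ^ 2 - 2 * α * β * N + β ^ 2) • 1 := by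
  rw [Finset.sum_comm]
  simp_rw [← Finset.sum_mul, hT.sum_mul_mul, sub_mul, smul_mul_assoc, one_mul,
    Finset.sum_sub_distrib, mul_smul, ← Finset.smul_sum, hT.sum_mul_self, hT.sum_trace_smul]
  module

theorem sum_trace_mul_mul_smul_mul_mul (hT : FierzIdentity T α β) :
    ∑ i, ∑ j, ∑ k, (T i * T j * T k).trace • (T i * T j * T k)
      = (α ^ 3 + 3 * α * β ^ 2 - (3 * α ^ 2 * β + β ^ 3) * N) • 1 := by
  calc ∑ i, ∑ j, ∑ k, (T i * T j * T k).trace • (T i * T j * T k)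
      = ∑ j, ∑ k, ∑ i, (T i * (T j * T k)).trace • (T i * (T j * T k)) := by
        simp_rw [Matrix.mul_assoc]
        rw [Finset.sum_comm]
        exact Finset.sum_congr rfl fun j _ => Finset.sum_comm
    _ = α • ∑ j, ∑ k, T j * T k * T j * T k
          - β • ∑ j, ∑ k, (T j * T k).trace • (T j * T k) := by
        simp_rw [hT.sum_trace_mul_smul_mul, Finset.sum_sub_distrib, Finset.smul_sum, mul_smul,
          Matrix.mul_assoc]
    _ = _ := by
        rw [hT.sum_sum_mul_mul_mul, hT.sum_sum_trace_mul_smul_mul]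
        module

theorem sum_trace_mul_mul_swap_smul_mul_mul (hT : FierzIdentity T α β) :
    ∑ i, ∑ j, ∑ k, (T i * T k * T j).trace • (T i * T j * T k)
      = (α ^ 3 * N ^ 2 + 3 * α * β ^ 2 - (3 * α ^ 2 * β + β ^ 3) * N) • 1 := by
  calc ∑ i, ∑ j, ∑ k, (T i * T k * T j).trace • (T i * T j * T k)
      = ∑ j, ∑ k, ∑ i, (T i * (T k * T j)).trace • (T i * (T j * T k)) := by
        simp_rw [Matrix.mul_assoc]
        rw [Finset.sum_comm]
        exact Finset.sum_congr rfl fun j _ => Finset.sum_comm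
    _ = α • ∑ k, T k * (∑ j, T j * T j) * T k
          - β • ∑ j, ∑ k, (T j * T k).trace • (T j * T k) := by
        simp_rw [hT.sum_trace_mul_smul_mul, Finset.sum_sub_distrib, Finset.mul_sum,
          Finset.sum_mul, Finset.smul_sum, mul_smul, trace_mul_comm (T _) (T _), Matrix.mul_assoc]
        rw [Finset.sum_comm]
    _ = _ := by
        simp_rw [hT.sum_mul_self, mul_smul_comm, smul_mul_assoc, mul_one, ← Finset.smul_sum,
          hT.sum_mul_self, hT.sum_sum_trace_mul_smul_mul]
        module

end FierzIdentity

theorem gellMann_seven_mul_gellMann_seven (a b c d : Fin 3) :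
    gellMann 7 a b * gellMann 7 c d =
      1 / 12 * ((!![1, 0, 0; 0, 1, 0; 0, 0, -2] : Matrix (Fin 3) (Fin 3) ℂ) a b *
        (!![1, 0, 0; 0, 1, 0; 0, 0, -2] : Matrix (Fin 3) (Fin 3) ℂ) c d) := by
  have h3 : (Real.sqrt 3 : ℂ) ^ 2 = 3 := by
    rw [← Complex.ofReal_pow, Real.sq_sqrt (by norm_num : (0 : ℝ) ≤ 3)]
    norm_num
  have hc : 1 / (2 * (Real.sqrt 3 : ℂ)) * (1 / (2 * Real.sqrt 3)) = 1 / 12 := by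
    field_simp
    linear_combination -4 * h3
  simp only [gellMann, Matrix.cons_val, Matrix.smul_apply, smul_eq_mul]
  rw [mul_mul_mul_comm, hc]

theorem gellMann_fierzIdentity : FierzIdentity gellMann (1 / 2) (1 / 6) := by
  intro a b c d
  rw [Fin.sum_univ_eight, gellMann_seven_mul_gellMann_seven]
  fin_cases a <;> fin_cases b <;> fin_cases c <;> fin_cases d <;>
    simp [gellMann, one_apply] <;> ring_nf <;> simp [Complex.I_sq] <;> norm_num

/-- The index-symmetrized cubic Casimir of su(3) in the defining representation:
`Σ_{I,J,K} [ (1/6)·Σ_{σ∈S₃} tr(T_{σ(I)}·T_{σ(J)}·T_{σ(K)}) ] · T_I·T_J·T_K = (5/18)·I₃`,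
where `σ` permutes the three index slots. -/
theorem gellMann_symmetrized_cubic_casimir :
    ∑ I : Fin 8, ∑ J : Fin 8, ∑ K : Fin 8,
        ((1 / 6 : ℂ) * ∑ σ : Equiv.Perm (Fin 3),
            (gellMann (![I, J, K] (σ 0)) * gellMann (![I, J, K] (σ 1)) *
              gellMann (![I, J, K] (σ 2))).trace)
          • (gellMann I * gellMann J * gellMann K)
      = (5 / 18 : ℂ) • (1 : Matrix (Fin 3) (Fin 3) ℂ) := by
  have hT := gellMann_fierzIdentity
  have halve (I J K : Fin 8) :
      ((1 / 6 : ℂ) * ∑ σ : Equiv.Perm (Fin 3),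
          (gellMann (![I, J, K] (σ 0)) * gellMann (![I, J, K] (σ 1)) *
            gellMann (![I, J, K] (σ 2))).trace) • (gellMann I * gellMann J * gellMann K)
        = (1 / 2 : ℂ) • ((gellMann I * gellMann J * gellMann K).trace •
            (gellMann I * gellMann J * gellMann K))
          + (1 / 2 : ℂ) • ((gellMann I * gellMann K * gellMann J).trace •
            (gellMann I * gellMann J * gellMann K)) := by
    have h := sum_perm_trace_mul_mul fun k => gellMann (![I, J, K] k)
    simp only [Matrix.cons_val] at h
    rw [h]
    module
  simp_rw [halve, Finset.sum_add_distrib, ← Finset.smul_sum, hT.sum_trace_mul_mul_smul_mul_mul,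
    hT.sum_trace_mul_mul_swap_smul_mul_mul, Fintype.card_fin, smul_smul, ← add_smul]
  norm_num
end

section
/- Let n ≥ 1, let f : [0,1]^n → ℝ be continuous, and let s₀ ∈ (0,1). Then lim_{ε→0⁺} ∫_{Δ_n} (1/(√π·ε))^n · f(s) · Π_{i=1}^{n} exp( −(s_i − s₀)²/ε² ) ds = (1/n!) · f(s₀, s₀, …, s₀), where Δ_n = { s ∈ [0,1]^n : s₁ ≤ s₂ ≤ … ≤ s_n } is the ordered simplex and ds is Lebesgue measure. -/
/-!
Substituting `s = s₀ + ε u` turns the integral into the integral of `f (s₀ + ε u)` against the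
normalised Gaussian `∏ i, π^(-1/2) exp (-(u i)²)` over the `u` in the monotone cone with
`s₀ + ε u ∈ [0,1]ⁿ`. Since `s₀` is interior, the last constraint disappears as `ε → 0`, and
dominated convergence gives `f (s₀, …, s₀)` times the Gaussian mass of the monotone cone. That mass
is `1/n!`: the Gaussian is symmetric, and the `n!` cones `{u | Monotone (u ∘ σ)}` tile `ℝⁿ` up to a
null set, since almost every point has distinct coordinates and is then sorted by exactly one `σ`.
-/

open MeasureTheory Filter Module

open scoped Nat Topology

section Permutations

variable {ι : Type*} [Fintype ι]

theorem volume_setOf_not_injective :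
    volume {u : ι → ℝ | ¬ Function.Injective u} = 0 := by
  classical
  have hsub : {u : ι → ℝ | ¬ Function.Injective u} ⊆
      ⋃ (i : ι) (j : ι) (_ : i ≠ j),
        (LinearMap.ker ((LinearMap.proj i : (ι → ℝ) →ₗ[ℝ] ℝ) - LinearMap.proj j) :
          Set (ι → ℝ)) := by
    intro u hu
    simp only [Function.Injective, not_forall] at hu
    obtain ⟨i, j, hij, hne⟩ := hu
    simpa [sub_eq_zero] using ⟨i, j, hne, hij⟩
  refine measure_mono_null hsub <| measure_iUnion_null fun i => measure_iUnion_null fun j =>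
    measure_iUnion_null fun hij => Measure.addHaar_submodule _ _ fun htop => ?_
  have hsingle : Pi.single i (1 : ℝ) ∈
      LinearMap.ker ((LinearMap.proj i : (ι → ℝ) →ₗ[ℝ] ℝ) - LinearMap.proj j) := htop ▸ trivial
  simp [Pi.single_eq_of_ne (Ne.symm hij)] at hsingle

theorem integral_comp_perm {E : Type*} [NormedAddCommGroup E] [NormedSpace ℝ E]
    (σ : Equiv.Perm ι) (F : (ι → ℝ) → E) :
    ∫ u, F (u ∘ σ) = ∫ u, F u := by
  have hcomp : ⇑(MeasurableEquiv.piCongrLeft (fun _ : ι => ℝ) σ.symm) = fun u => u ∘ σ := by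
    funext u j
    rw [MeasurableEquiv.coe_piCongrLeft]
    simpa using Equiv.piCongrLeft_apply_apply (fun _ : ι => ℝ) σ.symm u (σ j)
  have := (volume_measurePreserving_piCongrLeft (fun _ : ι => ℝ) σ.symm).integral_comp' F
  rwa [hcomp] at this

end Permutations

section OrderedCone

variable {n : ℕ} {E : Type*} [NormedAddCommGroup E] [NormedSpace ℝ E]

theorem setIntegral_monotone_comp_perm {F : (Fin n → ℝ) → E}
    (hF : ∀ (σ : Equiv.Perm (Fin n)) u, F (u ∘ σ) = F u) (σ : Equiv.Perm (Fin n)) :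
    ∫ u in {u : Fin n → ℝ | Monotone u}, F u = ∫ u in {u | Monotone (u ∘ σ)}, F u := by
  have hmeas : MeasurableSet {u : Fin n → ℝ | Monotone u} := isClosed_monotone.measurableSet
  have hmeasσ : MeasurableSet {u : Fin n → ℝ | Monotone (u ∘ σ)} :=
    hmeas.preimage (measurable_pi_lambda _ fun j => measurable_pi_apply (σ j))
  rw [← integral_indicator hmeas, ← integral_indicator hmeasσ, ← integral_comp_perm σ]
  congr 1 with u
  simp only [Set.indicator_apply, Set.mem_ofPred_eq, hF]

theorem factorial_mul_setIntegral_monotone {F : (Fin n → ℝ) → E} (hFint : Integrable F)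
    (hF : ∀ (σ : Equiv.Perm (Fin n)) u, F (u ∘ σ) = F u) :
    (n ! : ℝ) • ∫ u in {u : Fin n → ℝ | Monotone u}, F u = ∫ u, F u := by
  classical
  have hmeas (σ : Equiv.Perm (Fin n)) : MeasurableSet {u : Fin n → ℝ | Monotone (u ∘ σ)} :=
    isClosed_monotone.measurableSet.preimage
      (measurable_pi_lambda _ fun j => measurable_pi_apply (σ j))
  have htile : ∀ᵐ u : Fin n → ℝ,
      ∑ σ : Equiv.Perm (Fin n), {u | Monotone (u ∘ σ)}.indicator F u = F u := by
    have hinj : ∀ᵐ u : Fin n → ℝ, Function.Injective u :=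
      measure_mono_null (fun u hu => hu) volume_setOf_not_injective
    filter_upwards [hinj] with u hu
    rw [Finset.sum_eq_single_of_mem (Tuple.sort u) (Finset.mem_univ _),
      Set.indicator_of_mem (Tuple.monotone_sort u)]
    intro σ _ hσ
    refine Set.indicator_of_notMem (fun hσu => hσ ?_) F
    exact Equiv.ext fun j => hu (congrFun (Tuple.unique_monotone hσu (Tuple.monotone_sort u)) j)
  calc (n ! : ℝ) • ∫ u in {u : Fin n → ℝ | Monotone u}, F u
      = ∑ σ : Equiv.Perm (Fin n), ∫ u in {u | Monotone (u ∘ σ)}, F u := by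
        rw [Finset.sum_congr rfl fun σ _ => (setIntegral_monotone_comp_perm hF σ).symm,
          Finset.sum_const, Finset.card_univ, Fintype.card_perm, Fintype.card_fin,
          Nat.cast_smul_eq_nsmul]
    _ = ∫ u, ∑ σ : Equiv.Perm (Fin n), {u | Monotone (u ∘ σ)}.indicator F u := by
        rw [integral_finsetSum _ fun σ _ => hFint.indicator (hmeas σ)]
        simp only [integral_indicator (hmeas _)]
    _ = ∫ u, F u := integral_congr_ae htile

theorem setIntegral_monotone_prod {g : ℝ → ℝ} (hg : Integrable g) :
    ∫ u in {u : Fin n → ℝ | Monotone u}, ∏ i, g (u i) = (∫ x, g x) ^ n / n ! := by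
  have hfact := factorial_mul_setIntegral_monotone (n := n) (Integrable.fintype_prod fun _ => hg)
    fun σ u => Equiv.prod_comp σ fun i => g (u i)
  rw [integral_fintype_prod_volume_eq_pow, Fintype.card_fin, smul_eq_mul] at hfact
  rw [← hfact]
  field_simp

end OrderedCone

section RescaledKernel

variable {E : Type*} [NormedAddCommGroup E] [NormedSpace ℝ E] [FiniteDimensional ℝ E]
  [MeasurableSpace E] [BorelSpace E] {μ : Measure E} [μ.IsAddHaarMeasure]

theorem setIntegral_rescaled_kernel_eq {K f : E → ℝ} {s C : Set E} {a : E}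
    (hs : MeasurableSet s) (hC : MeasurableSet C) (hcone : ∀ c : ℝ, 0 < c → ∀ u ∈ C, c • u ∈ C)
    {ε : ℝ} (hε : 0 < ε) :
    ∫ x in s ∩ {x | x - a ∈ C}, (ε ^ finrank ℝ E)⁻¹ * K (ε⁻¹ • (x - a)) * f x ∂μ =
      ∫ u, ({u | a + ε • u ∈ s} ∩ C).indicator (fun u => K u * f (a + ε • u)) u ∂μ := by
  set S := s ∩ {x | x - a ∈ C}
  set H := fun x => (ε ^ finrank ℝ E)⁻¹ * K (ε⁻¹ • (x - a)) * f x
  have hS : MeasurableSet S := hs.inter (hC.preimage (measurable_id.sub_const a))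
  have hdil : ∀ u, a + ε • u - a ∈ C ↔ u ∈ C := fun u => by
    rw [add_sub_cancel_left]
    refine ⟨fun h => ?_, hcone ε hε u⟩
    simpa [smul_smul, inv_mul_cancel₀ hε.ne'] using hcone ε⁻¹ (inv_pos.2 hε) _ h
  have hpt : ∀ u, S.indicator H (a + ε • u) = (ε ^ finrank ℝ E)⁻¹ *
      ({u | a + ε • u ∈ s} ∩ C).indicator (fun u => K u * f (a + ε • u)) u := fun u => by
    by_cases hu : a + ε • u ∈ s ∧ u ∈ C
    · rw [Set.indicator_of_mem (show a + ε • u ∈ S from ⟨hu.1, (hdil u).2 hu.2⟩),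
        Set.indicator_of_mem (show u ∈ {u | a + ε • u ∈ s} ∩ C from hu)]
      simp [H, smul_smul, inv_mul_cancel₀ hε.ne', mul_assoc]
    · rw [Set.indicator_of_notMem (fun h : a + ε • u ∈ S => hu ⟨h.1, (hdil u).1 h.2⟩),
        Set.indicator_of_notMem (show u ∉ {u | a + ε • u ∈ s} ∩ C from hu), mul_zero]
  have hεd : ε ^ finrank ℝ E ≠ 0 := pow_ne_zero _ hε.ne'
  calc ∫ x in S, H x ∂μ = ∫ x, S.indicator H (a + x) ∂μ := by
        rw [integral_add_left_eq_self, integral_indicator hS]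
    _ = ε ^ finrank ℝ E * ∫ u, S.indicator H (a + ε • u) ∂μ := by
        rw [Measure.integral_comp_smul_of_nonneg μ (fun x => S.indicator H (a + x)) ε (hR := hε.le),
          smul_eq_mul, mul_inv_cancel_left₀ hεd]
    _ = _ := by
        simp only [hpt, integral_const_mul, mul_inv_cancel_left₀ hεd]

theorem tendsto_setIntegral_rescaled_kernel {K f : E → ℝ} {s C : Set E} {a : E}
    (hK : Integrable K μ) (hC : MeasurableSet C) (hcone : ∀ c : ℝ, 0 < c → ∀ u ∈ C, c • u ∈ C)
    (hs : IsCompact s) (hsa : s ∈ 𝓝 a) (hf : ContinuousOn f s) :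
    Tendsto (fun ε : ℝ =>
        ∫ x in s ∩ {x | x - a ∈ C}, (ε ^ finrank ℝ E)⁻¹ * K (ε⁻¹ • (x - a)) * f x ∂μ)
      (𝓝[>] 0) (𝓝 ((∫ u in C, K u ∂μ) * f a)) := by
  set G := fun (ε : ℝ) (u : E) =>
    ({u | a + ε • u ∈ s} ∩ C).indicator (fun u => K u * f (a + ε • u)) u
  obtain ⟨M, hM⟩ := hs.exists_bound_of_continuousOn hf
  have hcont (u : E) : Continuous fun ε : ℝ => a + ε • u := by fun_prop
  have hpre (ε : ℝ) : MeasurableSet ({u | a + ε • u ∈ s} ∩ C) :=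
    (hs.isClosed.measurableSet.preimage (by fun_prop)).inter hC
  have hmeas : ∀ᶠ ε in 𝓝[>] (0 : ℝ), AEStronglyMeasurable (G ε) μ :=
    Eventually.of_forall fun ε => (aestronglyMeasurable_indicator_iff (hpre ε)).2 <|
      hK.1.restrict.mul <| (hf.comp (by fun_prop) fun u hu => hu.1).aestronglyMeasurable (hpre ε)
  have hbound : ∀ᶠ ε in 𝓝[>] (0 : ℝ), ∀ᵐ u ∂μ, ‖G ε u‖ ≤ ‖K u‖ * M :=
    Eventually.of_forall fun ε => Eventually.of_forall fun u => by
      by_cases hu : u ∈ {u | a + ε • u ∈ s} ∩ C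
      · simp only [G, Set.indicator_of_mem hu, norm_mul]
        exact mul_le_mul_of_nonneg_left (hM _ hu.1) (norm_nonneg _)
      · simp only [G, Set.indicator_of_notMem hu, norm_zero]
        exact mul_nonneg (norm_nonneg _) ((norm_nonneg _).trans (hM a (mem_of_mem_nhds hsa)))
  have hlim : ∀ᵐ u ∂μ, Tendsto (fun ε => G ε u) (𝓝[>] 0) (𝓝 (C.indicator K u * f a)) :=
    Eventually.of_forall fun u => by
      have hpath : Tendsto (fun ε : ℝ => a + ε • u) (𝓝[>] 0) (𝓝 a) := by
        simpa using ((hcont u).tendsto 0).mono_left nhdsWithin_le_nhds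
      by_cases hu : u ∈ C
      · have hfa : Tendsto (fun ε : ℝ => K u * f (a + ε • u)) (𝓝[>] 0) (𝓝 (K u * f a)) :=
          ((hf.continuousAt hsa).tendsto.comp hpath).const_mul _
        rw [Set.indicator_of_mem hu]
        refine hfa.congr' ?_
        filter_upwards [hpath.eventually hsa] with ε hε
        exact (Set.indicator_of_mem (show u ∈ {u | a + ε • u ∈ s} ∩ C from ⟨hε, hu⟩)
          fun u => K u * f (a + ε • u)).symm
      · have hG (ε : ℝ) : G ε u = 0 := Set.indicator_of_notMem (fun h => hu h.2) _
        simp [hG, Set.indicator_of_notMem hu]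
  have hDCT := tendsto_integral_filter_of_dominated_convergence _ hmeas hbound
    (hK.norm.mul_const M) hlim
  rw [integral_mul_const, integral_indicator hC] at hDCT
  refine hDCT.congr' ?_
  filter_upwards [self_mem_nhdsWithin] with ε hε
  exact (setIntegral_rescaled_kernel_eq hs.isClosed.measurableSet hC hcone hε).symm

end RescaledKernel

theorem integral_inv_sqrt_pi_mul_exp_neg_sq :
    ∫ x : ℝ, (Real.sqrt Real.pi)⁻¹ * Real.exp (-x ^ 2) = 1 := by
  have hgauss := integral_gaussian 1
  simp only [neg_mul, one_mul, div_one] at hgauss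
  rw [integral_const_mul, hgauss, inv_mul_cancel₀ (Real.sqrt_pos.2 Real.pi_pos).ne']

theorem one_div_sqrt_pi_mul_pow_mul_prod_exp {n : ℕ} {ε : ℝ} (hε : ε ≠ 0)
    (s : Fin n → ℝ) (s₀ : ℝ) :
    (1 / (Real.sqrt Real.pi * ε)) ^ n * ∏ i, Real.exp (-(s i - s₀) ^ 2 / ε ^ 2) =
      (ε ^ n)⁻¹ * ∏ i, (Real.sqrt Real.pi)⁻¹ *
        Real.exp (-((ε⁻¹ • (s - fun _ => s₀) : Fin n → ℝ) i) ^ 2) := by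
  have hexp (i : Fin n) :
      -((ε⁻¹ • (s - fun _ => s₀) : Fin n → ℝ) i) ^ 2 = -(s i - s₀) ^ 2 / ε ^ 2 := by
    simp only [Pi.smul_apply, Pi.sub_apply, smul_eq_mul]
    field_simp
  simp only [hexp, Finset.prod_mul_distrib, Finset.prod_const, Finset.card_univ,
    Fintype.card_fin]
  rw [one_div, mul_inv, mul_pow, inv_pow]
  ring

theorem ordered_gaussian_approx_identity_general (n : ℕ) (f : (Fin n → ℝ) → ℝ)
    (hf : ContinuousOn f (Set.Icc 0 1)) (s₀ : ℝ) (hs₀ : s₀ ∈ Set.Ioo (0 : ℝ) 1) :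
    Tendsto
      (fun ε : ℝ =>
        ∫ s in {s : Fin n → ℝ | s ∈ Set.Icc (0 : Fin n → ℝ) 1 ∧ Monotone s},
          (1 / (Real.sqrt Real.pi * ε)) ^ n * f s *
            ∏ i, Real.exp (-(s i - s₀) ^ 2 / ε ^ 2))
      (nhdsWithin 0 (Set.Ioi 0))
      (nhds ((1 / n.factorial : ℝ) * f fun _ => s₀)) := by
  set g : ℝ → ℝ := fun x => (Real.sqrt Real.pi)⁻¹ * Real.exp (-x ^ 2)
  set a : Fin n → ℝ := fun _ => s₀
  have hg : Integrable g := by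
    simpa [g] using (integrable_exp_neg_mul_sq one_pos).const_mul (Real.sqrt Real.pi)⁻¹
  have ha : Set.Icc (0 : Fin n → ℝ) 1 ∈ 𝓝 a := by
    rw [← Set.pi_univ_Icc]
    exact set_pi_mem_nhds Set.finite_univ fun _ _ => Icc_mem_nhds hs₀.1 hs₀.2
  have hcone (c : ℝ) (hc : 0 < c) (u : Fin n → ℝ) (hu : Monotone u) : Monotone (c • u) :=
    hu.const_smul hc.le
  have hlim := tendsto_setIntegral_rescaled_kernel (μ := volume) (K := fun u => ∏ i, g (u i))
    (Integrable.fintype_prod fun _ => hg) isClosed_monotone.measurableSet hcone isCompact_Icc ha hf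
  rw [setIntegral_monotone_prod hg, integral_inv_sqrt_pi_mul_exp_neg_sq, one_pow,
    finrank_fin_fun] at hlim
  have hregion : {s : Fin n → ℝ | s ∈ Set.Icc (0 : Fin n → ℝ) 1 ∧ Monotone s} =
      Set.Icc 0 1 ∩ {x | Monotone (x - a)} := by
    ext x
    simp [a, Monotone]
  refine hlim.congr' ?_
  filter_upwards [self_mem_nhdsWithin] with ε hε
  rw [← hregion]
  refine setIntegral_congr_fun (measurableSet_Icc.inter isClosed_monotone.measurableSet)
    fun s _ => ?_
  rw [mul_right_comm _ (f s), one_div_sqrt_pi_mul_pow_mul_prod_exp (ne_of_gt hε)]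

/-- Regularized ordered integral of `n` coinciding delta functions: for continuous
`f : [0,1]^n → ℝ` (`n ≥ 1`) and `s₀ ∈ (0,1)`,
`lim_{ε→0⁺} ∫_{Δ_n} (1/(√π·ε))^n · f(s) · Π_i exp(−(s_i−s₀)²/ε²) ds = (1/n!)·f(s₀,…,s₀)`,
where `Δ_n = {s ∈ [0,1]^n : s₁ ≤ … ≤ s_n}` is the ordered simplex. -/
theorem ordered_gaussian_approx_identity (n : ℕ) (hn : 1 ≤ n) (f : (Fin n → ℝ) → ℝ)
    (hf : ContinuousOn f (Set.Icc 0 1)) (s₀ : ℝ) (hs₀ : s₀ ∈ Set.Ioo (0 : ℝ) 1) :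
    Tendsto
      (fun ε : ℝ =>
        ∫ s in {s : Fin n → ℝ | s ∈ Set.Icc (0 : Fin n → ℝ) 1 ∧ Monotone s},
          (1 / (Real.sqrt Real.pi * ε)) ^ n * f s *
            ∏ i, Real.exp (-(s i - s₀) ^ 2 / ε ^ 2))
      (nhdsWithin 0 (Set.Ioi 0))
      (nhds ((1 / n.factorial : ℝ) * f fun _ => s₀)) :=
  ordered_gaussian_approx_identity_general n f hf s₀ hs₀
end
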